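/- For every signed graph Σ, the maximum deficiency satisfies 2·M(Σ) ≤ χ(Σ). -/

import Mathlib

/-- A signed simple graph: a symmetric, loopless adjacency relation together with a
symmetric signature taking values `1` (positive) or `-1` (negative). -/
structure SignedGraph (V : Type) where
  Adj : V → V → Prop
  sign : V → V → ℤ
  symm : ∀ u v, Adj u v → Adj v u
  loopless : ∀ v, ¬ Adj v v
  sign_symm : ∀ u v, sign u v = sign v u
  sign_unit : ∀ u v, sign u v = 1 ∨ sign u v = -1

/-- The color set of size `n`: for `n = 2k` it is `{±1, …, ±k}`, and for
`n = 2k+1` it is `{±1, …, ±k, 0}`. -/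
noncomputable def colorSet (n : ℕ) : Finset ℤ :=
  (Finset.Icc (-((n / 2 : ℕ) : ℤ)) ((n / 2 : ℕ) : ℤ)).filter (fun i => i ≠ 0 ∨ n % 2 = 1)

/-- A proper coloration of a signed graph with the color set of size `n`:
the colors lie in `colorSet n` and for every edge `uv`, `κ u ≠ σ(uv) · κ v`. -/
def ProperColoring {V : Type} (G : SignedGraph V) (n : ℕ) (κ : V → ℤ) : Prop :=
  (∀ v, κ v ∈ colorSet n) ∧ ∀ u v, G.Adj u v → κ u ≠ G.sign u v * κ v

/-- The chromatic number: the least `n` such that there is a proper coloration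
with the color set of size `n`. -/
noncomputable def chromNum {V : Type} (G : SignedGraph V) : ℕ :=
  sInf {n | ∃ κ : V → ℤ, ProperColoring G n κ}

/-- The deficiency set of a (minimal) coloration: the colors of the color set of size
`χ(G)` not taken by `κ`. -/
noncomputable def defSet {V : Type} [Fintype V] (G : SignedGraph V) (κ : V → ℤ) : Finset ℤ :=
  (colorSet (chromNum G)).filter (fun c => ∀ v, κ v ≠ c)

/-- The deficiency of a (minimal) coloration: the number of unused colors. -/
noncomputable def deficiency {V : Type} [Fintype V] (G : SignedGraph V) (κ : V → ℤ) : ℕ :=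
  (defSet G κ).card

/-- The maximum deficiency: the maximum of `deficiency G κ` over all minimal
proper colorations `κ` of `G`. -/
noncomputable def maxDef {V : Type} [Fintype V] (G : SignedGraph V) : ℕ :=
  sSup {d | ∃ κ : V → ℤ, ProperColoring G (chromNum G) κ ∧ deficiency G κ = d}

/-- A signed graph (with even chromatic number `2k`) is exceptional if in every proper
coloration with color set `{±1, …, ±k}` using exactly `χ(G) - M(G)` distinct colors,
every used color appears on both endpoints of some negative edge. -/
def Exceptional {V : Type} [Fintype V] (G : SignedGraph V) : Prop :=
  ∀ κ : V → ℤ, ProperColoring G (chromNum G) κ →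
    (Finset.univ.image κ).card = chromNum G - maxDef G →
    ∀ c ∈ Finset.univ.image κ,
      ∃ u v, G.Adj u v ∧ G.sign u v = -1 ∧ κ u = c ∧ κ v = c

/-- The all-positive join of two (vertex-disjoint) signed graphs: keep the edges and
signs of both graphs and join every vertex of the first to every vertex of the second
by a positive edge. -/
def posJoin {V₁ V₂ : Type} (G₁ : SignedGraph V₁) (G₂ : SignedGraph V₂) :
    SignedGraph (V₁ ⊕ V₂) where
  Adj x y :=
    match x, y with
    | Sum.inl a, Sum.inl b => G₁.Adj a b
    | Sum.inr a, Sum.inr b => G₂.Adj a b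
    | _, _ => True
  sign x y :=
    match x, y with
    | Sum.inl a, Sum.inl b => G₁.sign a b
    | Sum.inr a, Sum.inr b => G₂.sign a b
    | _, _ => 1
  symm := by
    rintro (a | a) (b | b) h
    · exact G₁.symm a b h
    · trivial
    · trivial
    · exact G₂.symm a b h
  loopless := by
    rintro (a | a) h
    · exact G₁.loopless a h
    · exact G₂.loopless a h
  sign_symm := by
    rintro (a | a) (b | b)
    · exact G₁.sign_symm a b
    · rfl
    · rfl
    · exact G₂.sign_symm a b
  sign_unit := by
    rintro (a | a) (b | b)
    · exact G₁.sign_unit a b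
    · exact Or.inl rfl
    · exact Or.inl rfl
    · exact G₂.sign_unit a b

lemma card_colorSet (n : ℕ) : (colorSet n).card = n := by
  classical
  unfold colorSet
  by_cases h : n % 2 = 1
  · rw [Finset.filter_true_of_mem (fun x _ => Or.inr h), Int.card_Icc]
    omega
  · rw [Finset.filter_congr (fun x _ => by simp [h] : ∀ x ∈ Finset.Icc (-((n / 2 : ℕ) : ℤ)) ((n / 2 : ℕ) : ℤ), ((x ≠ 0 ∨ n % 2 = 1)) ↔ (x ≠ 0))]
    rw [Finset.filter_ne', Finset.card_erase_of_mem (by rw [Finset.mem_Icc]; omega), Int.card_Icc]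
    omega

lemma mem_colorSet {n : ℕ} {c : ℤ} :
    c ∈ colorSet n ↔ (-((n / 2 : ℕ) : ℤ) ≤ c ∧ c ≤ ((n / 2 : ℕ) : ℤ) ∧ (c ≠ 0 ∨ n % 2 = 1)) := by
  simp [colorSet, Finset.mem_filter, Finset.mem_Icc, and_assoc]

lemma two_def_le {V : Type} [Fintype V] (S : SignedGraph V) (κ : V → ℤ)
    (hκ : ProperColoring S (chromNum S) κ) : 2 * deficiency S κ ≤ chromNum S := by
  classical
  set n := chromNum S with hn
  set k : ℤ := ((n / 2 : ℕ) : ℤ) with hk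
  by_contra hcon
  push_neg at hcon
  by_cases hA : ∃ i : ℤ, 1 ≤ i ∧ i ≤ k ∧ (∀ v, κ v ≠ i) ∧ (∀ v, κ v ≠ -i)
  · obtain ⟨i, hi1, hik, hiu, hniu⟩ := hA
    have hn2 : 2 ≤ n := by omega
    set f : ℤ → ℤ := fun c => if c = k then i else if c = -k then -i else c with hf
    have hinj : ∀ a b : ℤ, -k ≤ a → a ≤ k → -k ≤ b → b ≤ k → a ≠ i → a ≠ -i → b ≠ i → b ≠ -i →
        ((f a = f b → a = b) ∧ (f a = -f b → a = -b)) := by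
      intro a b h1 h2 h3 h4 h5 h6 h7 h8
      constructor <;> intro hEq <;> simp only [hf] at hEq <;> split_ifs at hEq <;> omega
    have hcast : (((n - 2) / 2 : ℕ) : ℤ) = k - 1 := by omega
    have hpar : (n - 2) % 2 = n % 2 := by omega
    have hproper : ProperColoring S (n - 2) (fun v => f (κ v)) := by
      constructor
      · intro v
        have hv := hκ.1 v
        rw [mem_colorSet] at hv
        rw [mem_colorSet, hcast, hpar]
        have h5 := hiu v
        have h6 := hniu v
        simp only [hf]
        split_ifs <;> omega
      · intro u v huv hEq
        have h1 := hκ.2 u v huv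
        have hu := hκ.1 u
        have hv' := hκ.1 v
        rw [mem_colorSet] at hu hv'
        have H := hinj (κ u) (κ v) hu.1 hu.2.1 hv'.1 hv'.2.1 (hiu u) (hniu u) (hiu v) (hniu v)
        rcases S.sign_unit u v with hs | hs <;> rw [hs] at hEq h1
        · rw [one_mul] at hEq h1
          exact h1 (H.1 hEq)
        · have hEq' : f (κ u) = -1 * f (κ v) := hEq
          apply h1
          have := H.2 (by omega)
          omega
    have : chromNum S ≤ n - 2 := Nat.sInf_le ⟨_, hproper⟩
    omega
  · push_neg at hA
    set Used : Finset ℤ := (colorSet n).filter (fun c => ∃ v, κ v = c) with hU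
    have hcardsum : deficiency S κ + Used.card = n := by
      have hUeq : Used = (colorSet n).filter (fun c => ¬ ∀ v, κ v ≠ c) := by
        apply Finset.filter_congr
        intro c _
        simp
      rw [hUeq]
      unfold deficiency defSet
      rw [← hn, Finset.card_filter_add_card_filter_not, card_colorSet]
    set g : ℤ → ℤ := fun i => if ∃ v, κ v = i then i else -i with hg
    set S0 := (Finset.Icc (1 : ℤ) k).image g with hS0
    have hgmem : ∀ i ∈ Finset.Icc (1 : ℤ) k, g i ∈ Used := by
      intro i hi
      rw [Finset.mem_Icc] at hi
      rw [hU, Finset.mem_filter, mem_colorSet]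
      simp only [hg]
      split_ifs with hex
      · exact ⟨⟨by omega, by omega, Or.inl (by omega)⟩, hex⟩
      · push_neg at hex
        obtain ⟨v, hv⟩ := hA i hi.1 hi.2 hex
        exact ⟨⟨by omega, by omega, Or.inl (by omega)⟩, ⟨v, hv⟩⟩
    have hinj0 : Set.InjOn g (Finset.Icc (1 : ℤ) k) := by
      intro a ha b hb hab
      simp only [Finset.coe_Icc, Set.mem_Icc] at ha hb
      simp only [hg] at hab
      split_ifs at hab <;> omega
    have hcard0 : S0.card = n / 2 := by
      rw [hS0, Finset.card_image_of_injOn hinj0, Int.card_Icc]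
      omega
    have hsub : S0 ⊆ Used := by
      intro c hc
      rw [hS0, Finset.mem_image] at hc
      obtain ⟨i, hi, rfl⟩ := hc
      exact hgmem i hi
    have hUk : n / 2 ≤ Used.card := hcard0 ▸ Finset.card_le_card hsub
    by_cases hodd : n % 2 = 1
    · by_cases h0 : ∀ v, κ v ≠ 0
      · have hcast1 : (((n - 1) / 2 : ℕ) : ℤ) = k := by omega
        have hproper : ProperColoring S (n - 1) κ := by
          refine ⟨fun v => ?_, hκ.2⟩
          have hv := hκ.1 v
          rw [mem_colorSet] at hv
          rw [mem_colorSet, hcast1]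
          exact ⟨hv.1, hv.2.1, Or.inl (h0 v)⟩
        have : chromNum S ≤ n - 1 := Nat.sInf_le ⟨_, hproper⟩
        omega
      · push_neg at h0
        have h0U : (0 : ℤ) ∈ Used := by
          rw [hU, Finset.mem_filter, mem_colorSet]
          exact ⟨⟨by omega, by omega, Or.inr hodd⟩, h0⟩
        have h0S : (0 : ℤ) ∉ S0 := by
          rw [hS0, Finset.mem_image]
          rintro ⟨i, hi, hgi⟩
          rw [Finset.mem_Icc] at hi
          simp only [hg] at hgi
          split_ifs at hgi <;> omega
        have hUk1 : n / 2 + 1 ≤ Used.card := by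
          have hins := Finset.card_le_card (Finset.insert_subset h0U hsub)
          rw [Finset.card_insert_of_notMem h0S, hcard0] at hins
          omega
        omega
    · omega

/-- for every signed graph, `2·M(S) ≤ χ(S)`. -/
theorem two_maxDef_le_chromNum {V : Type} [Fintype V] (S : SignedGraph V) :
    2 * maxDef S ≤ chromNum S := by
  classical
  rcases Set.eq_empty_or_nonempty {d | ∃ κ : V → ℤ, ProperColoring S (chromNum S) κ ∧ deficiency S κ = d} with he | hne
  · have : maxDef S = 0 := by
      unfold maxDef
      rw [he, csSup_empty]
      rfl
    simp [this]
  · have hb : ∀ d ∈ {d | ∃ κ : V → ℤ, ProperColoring S (chromNum S) κ ∧ deficiency S κ = d}, d ≤ chromNum S / 2 := by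
      rintro d ⟨κ, hκ, rfl⟩
      have := two_def_le S κ hκ
      omega
    have hle : maxDef S ≤ chromNum S / 2 := csSup_le hne hb
    omega
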